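/- Let G₁ and G₂ be finite groups of coprime orders. Then the poset Iso(G₁ × G₂) is order isomorphic to the product poset Iso(G₁) × Iso(G₂), where the product carries the componentwise order. -/

import Mathlib

/-- The setoid on subgroups of `G` given by group isomorphism. -/
def isoSetoid (G : Type*) [Group G] : Setoid (Subgroup G) where
  r H K := Nonempty (H ≃* K)
  iseqv := ⟨fun H => ⟨MulEquiv.refl H⟩, fun ⟨e⟩ => ⟨e.symm⟩, fun ⟨e⟩ ⟨f⟩ => ⟨e.trans f⟩⟩

/-- `IsoClasses G` is the set of equivalence classes of subgroups of `G`
under group isomorphism. -/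
def IsoClasses (G : Type*) [Group G] : Type _ := Quotient (isoSetoid G)

/-- The class of a subgroup `H` in `IsoClasses G`. -/
def IsoCls {G : Type*} [Group G] (H : Subgroup G) : IsoClasses G :=
  Quotient.mk (isoSetoid G) H

/-- `[H] ≤ [K]` iff some member of `[H]` is contained in some member of `[K]`. -/
instance instLEIsoClasses (G : Type*) [Group G] : LE (IsoClasses G) where
  le x y := ∃ H K : Subgroup G, IsoCls H = x ∧ IsoCls K = y ∧ H ≤ K

/-! If `Nat.card G₁` and `Nat.card G₂` are coprime, choose `k ≡ 1 [MOD Nat.card G₁]` and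
`k ≡ 0 [MOD Nat.card G₂]`; then `(a, b) ^ k = (a, 1)`, so every subgroup of `G₁ × G₂` is the
product of its two projections. Conversely, an isomorphism `A × B ≃* C × D` with
`|A|` prime to `|D|` and `|C|` prime to `|B|` carries `A × 1` onto `C × 1`, because a
homomorphism between groups of coprime orders is trivial. Hence `([A], [B]) ↦ [A.prod B]` is a
bijection `Iso(G₁) × Iso(G₂) → Iso(G₁ × G₂)`, and it reflects the order because inclusions
between subgroups of `G₁ × G₂` are inclusions of their projections. -/

section CoprimeOrders

variable {A B C D : Type*} [Group A] [Group B] [Group C] [Group D]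

theorem MonoidHom.apply_eq_one_of_coprime_natCard (hAD : Nat.Coprime (Nat.card A) (Nat.card D))
    (f : A →* D) (a : A) : f a = 1 :=
  orderOf_eq_one_iff.mp <| Nat.eq_one_of_dvd_coprimes hAD
    ((orderOf_map_dvd f a).trans (orderOf_dvd_natCard a)) (orderOf_dvd_natCard (f a))

theorem Prod.exists_pow_eq_mk_pow_pow_of_coprime (hAB : Nat.Coprime (Nat.card A) (Nat.card B))
    (i j : ℕ) : ∃ k : ℕ, ∀ x : A × B, x ^ k = (x.1 ^ i, x.2 ^ j) := by
  obtain ⟨k, hki, hkj⟩ := Nat.chineseRemainder hAB i j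
  refine ⟨k, fun x => Prod.ext ?_ ?_⟩
  · rw [Prod.pow_fst, ← pow_mod_natCard, hki, pow_mod_natCard]
  · rw [Prod.pow_snd, ← pow_mod_natCard, hkj, pow_mod_natCard]

theorem Subgroup.eq_prod_map_fst_map_snd_of_coprime
    (hAB : Nat.Coprime (Nat.card A) (Nat.card B)) (H : Subgroup (A × B)) :
    H = (H.map (MonoidHom.fst A B)).prod (H.map (MonoidHom.snd A B)) := by
  obtain ⟨k, hk⟩ := Prod.exists_pow_eq_mk_pow_pow_of_coprime hAB 1 0
  obtain ⟨l, hl⟩ := Prod.exists_pow_eq_mk_pow_pow_of_coprime hAB 0 1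
  refine le_antisymm (fun x hx => ⟨⟨x, hx, rfl⟩, ⟨x, hx, rfl⟩⟩) ?_
  rintro ⟨_, _⟩ ⟨⟨x, hx, rfl⟩, ⟨y, hy, rfl⟩⟩
  simpa [hk, hl] using mul_mem (pow_mem hx k) (pow_mem hy l)

theorem MonoidHom.map_range_inl_le_range_inl_of_coprime
    (hAD : Nat.Coprime (Nat.card A) (Nat.card D)) (f : A × B →* C × D) :
    (MonoidHom.inl A B).range.map f ≤ (MonoidHom.inl C D).range := by
  rintro _ ⟨_, ⟨a, rfl⟩, rfl⟩
  have h : (f (a, 1)).2 = 1 :=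
    ((MonoidHom.snd C D).comp (f.comp (MonoidHom.inl A B))).apply_eq_one_of_coprime_natCard hAD a
  exact ⟨(f (a, 1)).1, Prod.ext rfl h.symm⟩

theorem MulEquiv.map_range_inl_eq_range_inl_of_coprime
    (hAD : Nat.Coprime (Nat.card A) (Nat.card D)) (hCB : Nat.Coprime (Nat.card C) (Nat.card B))
    (e : A × B ≃* C × D) :
    (MonoidHom.inl A B).range.map e = (MonoidHom.inl C D).range := by
  refine le_antisymm (MonoidHom.map_range_inl_le_range_inl_of_coprime hAD _) ?_
  rw [Subgroup.map_equiv_eq_comap_symm, ← Subgroup.map_le_iff_le_comap]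
  exact MonoidHom.map_range_inl_le_range_inl_of_coprime hCB _

theorem MulEquiv.nonempty_mulEquiv_of_prod_of_coprime
    (hAD : Nat.Coprime (Nat.card A) (Nat.card D)) (hCB : Nat.Coprime (Nat.card C) (Nat.card B))
    (e : A × B ≃* C × D) : Nonempty (A ≃* C) :=
  ⟨(MonoidHom.ofInjective (Prod.mk_left_injective 1)).trans <| (e.subgroupMap _).trans <|
    (MulEquiv.subgroupCongr (e.map_range_inl_eq_range_inl_of_coprime hAD hCB)).trans
      (MonoidHom.ofInjective (Prod.mk_left_injective 1)).symm⟩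

end CoprimeOrders

theorem Subgroup.nonempty_mulEquiv_of_prod_mulEquiv_prod {G₁ G₂ : Type*} [Group G₁] [Group G₂]
    (hcop : Nat.Coprime (Nat.card G₁) (Nat.card G₂)) {A C : Subgroup G₁} {B D : Subgroup G₂}
    (e : A.prod B ≃* C.prod D) : Nonempty (A ≃* C) ∧ Nonempty (B ≃* D) := by
  let e' : A × B ≃* C × D := (A.prodEquiv B).symm.trans (e.trans (C.prodEquiv D))
  have hcop' {H : Subgroup G₁} {K : Subgroup G₂} : Nat.Coprime (Nat.card H) (Nat.card K) :=
    hcop.of_dvd H.card_subgroup_dvd_card K.card_subgroup_dvd_card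
  exact ⟨e'.nonempty_mulEquiv_of_prod_of_coprime hcop' hcop',
    (MulEquiv.prodComm.trans (e'.trans MulEquiv.prodComm)).nonempty_mulEquiv_of_prod_of_coprime
      hcop'.symm hcop'.symm⟩

namespace IsoClasses

variable {G G₁ G₂ : Type*} [Group G] [Group G₁] [Group G₂]

theorem isoCls_surjective : Function.Surjective (IsoCls : Subgroup G → IsoClasses G) :=
  Quotient.mk_surjective

theorem isoCls_eq_isoCls_iff {H K : Subgroup G} : IsoCls H = IsoCls K ↔ Nonempty (H ≃* K) :=
  Quotient.eq

def prod : IsoClasses G₁ × IsoClasses G₂ → IsoClasses (G₁ × G₂) := fun p =>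
  Quotient.map₂ (sa := isoSetoid G₁) (sb := isoSetoid G₂) (sc := isoSetoid (G₁ × G₂)) Subgroup.prod
    (fun _ _ ⟨eA⟩ _ _ ⟨eB⟩ =>
      ⟨(Subgroup.prodEquiv _ _).trans ((eA.prodCongr eB).trans (Subgroup.prodEquiv _ _).symm)⟩)
    p.1 p.2

theorem prod_isoCls_isoCls (A : Subgroup G₁) (B : Subgroup G₂) :
    prod (IsoCls A, IsoCls B) = IsoCls (A.prod B) :=
  rfl

theorem prod_isoCls_map_fst_isoCls_map_snd (hcop : Nat.Coprime (Nat.card G₁) (Nat.card G₂))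
    (H : Subgroup (G₁ × G₂)) :
    prod (IsoCls (H.map (MonoidHom.fst G₁ G₂)), IsoCls (H.map (MonoidHom.snd G₁ G₂))) =
      IsoCls H := by
  rw [prod_isoCls_isoCls, ← H.eq_prod_map_fst_map_snd_of_coprime hcop]

theorem prod_surjective (hcop : Nat.Coprime (Nat.card G₁) (Nat.card G₂)) :
    Function.Surjective (prod (G₁ := G₁) (G₂ := G₂)) := by
  intro x
  obtain ⟨H, rfl⟩ := isoCls_surjective x
  exact ⟨_, prod_isoCls_map_fst_isoCls_map_snd hcop H⟩

theorem prod_injective (hcop : Nat.Coprime (Nat.card G₁) (Nat.card G₂)) :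
    Function.Injective (prod (G₁ := G₁) (G₂ := G₂)) := by
  rintro ⟨a, b⟩ ⟨c, d⟩ h
  obtain ⟨A, rfl⟩ := isoCls_surjective a
  obtain ⟨B, rfl⟩ := isoCls_surjective b
  obtain ⟨C, rfl⟩ := isoCls_surjective c
  obtain ⟨D, rfl⟩ := isoCls_surjective d
  obtain ⟨e⟩ := isoCls_eq_isoCls_iff.mp h
  obtain ⟨⟨eAC⟩, ⟨eBD⟩⟩ := Subgroup.nonempty_mulEquiv_of_prod_mulEquiv_prod hcop e
  exact Prod.ext (isoCls_eq_isoCls_iff.mpr ⟨eAC⟩) (isoCls_eq_isoCls_iff.mpr ⟨eBD⟩)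

theorem prod_le_prod_iff (hcop : Nat.Coprime (Nat.card G₁) (Nat.card G₂))
    {p q : IsoClasses G₁ × IsoClasses G₂} : prod p ≤ prod q ↔ p ≤ q := by
  constructor
  · rintro ⟨H, K, hH, hK, hHK⟩
    rw [← prod_isoCls_map_fst_isoCls_map_snd hcop H] at hH
    rw [← prod_isoCls_map_fst_isoCls_map_snd hcop K] at hK
    rw [← prod_injective hcop hH, ← prod_injective hcop hK]
    exact ⟨⟨_, _, rfl, rfl, Subgroup.map_mono hHK⟩, ⟨_, _, rfl, rfl, Subgroup.map_mono hHK⟩⟩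
  · obtain ⟨a, b⟩ := p
    obtain ⟨c, d⟩ := q
    rintro ⟨⟨A, C, rfl, rfl, hAC⟩, ⟨B, D, rfl, rfl, hBD⟩⟩
    exact ⟨A.prod B, C.prod D, rfl, rfl, Subgroup.prod_mono hAC hBD⟩

end IsoClasses

theorem isoClasses_prod_orderIso_of_coprime_general
    (G₁ : Type*) [Group G₁] (G₂ : Type*) [Group G₂]
    (hcop : Nat.Coprime (Nat.card G₁) (Nat.card G₂)) :
    Nonempty (IsoClasses (G₁ × G₂) ≃o IsoClasses G₁ × IsoClasses G₂) :=
  ⟨OrderIso.symm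
    { toEquiv := .ofBijective IsoClasses.prod
        ⟨IsoClasses.prod_injective hcop, IsoClasses.prod_surjective hcop⟩
      map_rel_iff' := IsoClasses.prod_le_prod_iff hcop }⟩

/-- If `G₁` and `G₂` are finite groups of coprime orders, then
`IsoClasses (G₁ × G₂)` is order isomorphic to the product poset
`IsoClasses G₁ × IsoClasses G₂` with the componentwise order. -/
theorem isoClasses_prod_orderIso_of_coprime
    (G₁ : Type*) [Group G₁] [Finite G₁] (G₂ : Type*) [Group G₂] [Finite G₂]
    (hcop : Nat.Coprime (Nat.card G₁) (Nat.card G₂)) :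
    Nonempty (IsoClasses (G₁ × G₂) ≃o IsoClasses G₁ × IsoClasses G₂) :=
  isoClasses_prod_orderIso_of_coprime_general G₁ G₂ hcop
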